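/- Fix an integer g ≥ 1 and let (Q_1,…,Q_{g+1},W_1,…,W_{g+1}) ∈ ℝ^{2(g+1)} satisfy Σ_{i=1}^{g+1} Q_i < Σ_{i=1}^{g+1} W_i, and let (Q'_i, W'_i) be its image under the UD-pToda map. Then Σ_{i=1}^{g+1} Q'_i = Σ_{i=1}^{g+1} Q_i and Σ_{i=1}^{g+1} W'_i = Σ_{i=1}^{g+1} W_i. In particular Σ Q'_i < Σ W'_i, and the quantities C_0 = min(Σ Q_i, Σ W_i) and C_{−1} = Σ_{i=1}^{g+1} (Q_i + W_i) are preserved by the map. -/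

import Mathlib

open Fin.NatCast in
/-- `X_i = min_{k=0,…,g} Σ_{l=1}^{k} (W_{i−l} − Q_{i−l})` of the ultra-discrete
periodic Toda lattice (indices cyclic mod `g+1`; the `k = 0` term is `0`). -/
noncomputable def udX (g : ℕ) (Q W : Fin (g + 1) → ℝ) (i : Fin (g + 1)) : ℝ :=
  (Finset.range (g + 1)).inf' (Finset.nonempty_range_iff.mpr g.succ_ne_zero)
    fun k => ∑ l ∈ Finset.Icc 1 k,
      (W (i - (l : Fin (g + 1))) - Q (i - (l : Fin (g + 1))))

/-!
Write `D_j = W_j - Q_j`. The partial sums whose minimum is `X_{i+1}` are `0` together with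
`D_i + Σ_{l=1}^{k} D_{i-l}` for `k < g`, i.e. those of `X_i` shifted by `D_i`, except that the
longest one, `D_i + Σ_{l=1}^{g} D_{i-l} = Σ_j D_j`, is missing. As `Σ_j D_j > 0`, it cannot be
the minimum of `0` and the others, so `X_{i+1} = min(0, D_i + X_i)`. This turns
`Q'_i = min(W_i, Q_i - X_i)` into `Q_i - X_i + X_{i+1}`, which telescopes to `Σ Q'_i = Σ Q_i`,
and then `Σ W'_i = Σ W_i` is read off the definition of `W'_i`.
-/

open Finset

theorem Finset.inf'_range_eq_min_zero_add_inf' {α : Type*} [AddCommMonoid α] [LinearOrder α]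
    [IsOrderedAddMonoid α] {n : ℕ} {p q : ℕ → α} {d : α} (hq₀ : q 0 = 0)
    (hq : ∀ k, q (k + 1) = d + p k) (hpos : 0 < d + p n) :
    (range (n + 1)).inf' nonempty_range_add_one q =
      min 0 (d + (range (n + 1)).inf' nonempty_range_add_one p) := by
  have hq_le_zero : (range (n + 1)).inf' nonempty_range_add_one q ≤ 0 :=
    hq₀ ▸ inf'_le q (by simp)
  apply le_antisymm
  · obtain ⟨k, hk, hmin⟩ := exists_mem_eq_inf' nonempty_range_add_one p
    rw [hmin]
    refine le_min hq_le_zero ?_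
    rcases (mem_range_succ_iff.mp hk).lt_or_eq with hkn | rfl
    · exact hq k ▸ inf'_le q (mem_range_succ_iff.mpr hkn)
    · exact hq_le_zero.trans hpos.le
  · refine le_inf' _ _ fun k hk => ?_
    cases k with
    | zero => exact hq₀ ▸ min_le_left _ _
    | succ j =>
      rw [hq]
      exact (min_le_right _ _).trans
        (add_le_add_right (inf'_le p (mem_range.mpr (Nat.lt_of_succ_lt (mem_range.mp hk)))) d)

section BackwardPartialSum

open Fin.NatCast

variable {M : Type*} [AddCommMonoid M] {n : ℕ}

def backwardPartialSum (D : Fin (n + 1) → M) (i : Fin (n + 1)) (k : ℕ) : M :=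
  ∑ l ∈ Icc 1 k, D (i - l)

@[simp]
theorem backwardPartialSum_zero (D : Fin (n + 1) → M) (i : Fin (n + 1)) :
    backwardPartialSum D i 0 = 0 := by
  simp [backwardPartialSum]

theorem backwardPartialSum_succ (D : Fin (n + 1) → M) (i : Fin (n + 1)) (k : ℕ) :
    backwardPartialSum D (i + 1) (k + 1) = D i + backwardPartialSum D i k := by
  induction k with
  | zero => simp [backwardPartialSum]
  | succ k ih =>
    unfold backwardPartialSum at ih ⊢
    rw [sum_Icc_succ_top (by omega), ih, sum_Icc_succ_top (by omega), add_assoc]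
    congr 3
    push_cast
    abel

theorem add_backwardPartialSum_eq_sum (D : Fin (n + 1) → M) (i : Fin (n + 1)) :
    D i + backwardPartialSum D i n = ∑ j, D j := by
  calc D i + backwardPartialSum D i n
      = ∑ l ∈ range (n + 1), D (i - l) := by
        rw [backwardPartialSum, ← Ico_add_one_right_eq_Icc, range_eq_Ico,
          sum_eq_sum_Ico_succ_bot (Nat.succ_pos n)]
        simp
    _ = ∑ l : Fin (n + 1), D (i - l) := by
        rw [← Fin.sum_univ_eq_sum_range]
        simp only [Fin.cast_val_eq_self]
    _ = ∑ j, D j := Fintype.sum_equiv (Equiv.subLeft i) _ _ fun _ => rfl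

end BackwardPartialSum

theorem udX_add_one {g : ℕ} {Q W : Fin (g + 1) → ℝ} (h : ∑ i, Q i < ∑ i, W i)
    (i : Fin (g + 1)) : udX g Q W (i + 1) = min 0 (W i - Q i + udX g Q W i) :=
  inf'_range_eq_min_zero_add_inf' (p := backwardPartialSum (W - Q) i)
    (q := backwardPartialSum (W - Q) (i + 1)) (d := W i - Q i)
    (backwardPartialSum_zero _ _) (backwardPartialSum_succ _ _) <| by
      rw [← Pi.sub_apply W Q, add_backwardPartialSum_eq_sum]
      simpa [sum_sub_distrib] using h

theorem min_sub_udX_eq_sub_udX_add_udX_add_one {g : ℕ} {Q W : Fin (g + 1) → ℝ}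
    (h : ∑ i, Q i < ∑ i, W i) (i : Fin (g + 1)) :
    min (W i) (Q i - udX g Q W i) = Q i - udX g Q W i + udX g Q W (i + 1) := by
  rw [udX_add_one h, ← min_add_add_left, add_zero, min_comm]
  congr 1
  ring

theorem udpToda_preserves_sums_general (g : ℕ) (Q W Q' W' : Fin (g + 1) → ℝ)
    (h : (∑ i, Q i) < ∑ i, W i)
    (hQ' : ∀ i : Fin (g + 1), Q' i = min (W i) (Q i - udX g Q W i))
    (hW' : ∀ i : Fin (g + 1), W' i = Q (i + 1) + W i - Q' i) :
    (∑ i, Q' i) = (∑ i, Q i) ∧ (∑ i, W' i) = (∑ i, W i) ∧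
    (∑ i, Q' i) < (∑ i, W' i) ∧
    min (∑ i, Q' i) (∑ i, W' i) = min (∑ i, Q i) (∑ i, W i) ∧
    (∑ i, (Q' i + W' i)) = ∑ i, (Q i + W i) := by
  have sum_comp_add_one (f : Fin (g + 1) → ℝ) : ∑ i, f (i + 1) = ∑ i, f i :=
    Fintype.sum_equiv (Equiv.addRight 1) _ _ fun _ => rfl
  have hQ : ∑ i, Q' i = ∑ i, Q i := by
    simp only [hQ', min_sub_udX_eq_sub_udX_add_udX_add_one h, sum_add_distrib, sum_sub_distrib,
      sum_comp_add_one (udX g Q W), sub_add_cancel]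
  have hW : ∑ i, W' i = ∑ i, W i := by
    simp only [hW', sum_sub_distrib, sum_add_distrib, sum_comp_add_one Q, hQ, add_sub_cancel_left]
  refine ⟨hQ, hW, hQ ▸ hW ▸ h, by rw [hQ, hW], ?_⟩
  rw [sum_add_distrib, sum_add_distrib, hQ, hW]

/-- The UD-pToda map `Q'_i = min(W_i, Q_i − X_i)`, `W'_i = Q_{i+1} + W_i − Q'_i`
preserves `Σ Q_i` and `Σ W_i`; in particular it preserves `Σ Q_i < Σ W_i`,
`C_0 = min(Σ Q_i, Σ W_i)` and `C_{−1} = Σ (Q_i + W_i)`. -/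
theorem udpToda_preserves_sums (g : ℕ) (hg : 1 ≤ g) (Q W Q' W' : Fin (g + 1) → ℝ)
    (h : (∑ i, Q i) < ∑ i, W i)
    (hQ' : ∀ i : Fin (g + 1), Q' i = min (W i) (Q i - udX g Q W i))
    (hW' : ∀ i : Fin (g + 1), W' i = Q (i + 1) + W i - Q' i) :
    (∑ i, Q' i) = (∑ i, Q i) ∧ (∑ i, W' i) = (∑ i, W i) ∧
    (∑ i, Q' i) < (∑ i, W' i) ∧
    min (∑ i, Q' i) (∑ i, W' i) = min (∑ i, Q i) (∑ i, W i) ∧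
    (∑ i, (Q' i + W' i)) = ∑ i, (Q i + W i) :=
  udpToda_preserves_sums_general g Q W Q' W' h hQ' hW'
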